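/- arXiv:1904.07957 — 2 statements merged into one kernel-verified Lean document; each statement's English description precedes it below -/
import Mathlib

section
/- The factor 2 in the almost-smoothness of maximum-matching size is tight: there exist pairwise disjoint edge sets A, B, C (on a graph consisting of n vertex-disjoint paths of length 3, where A contains the first edge of each path, B the middle edge, and C the last edge) such that m(A ∪ B) = m(B) = m(B ∪ C) = n while m(A ∪ B ∪ C) = 2n. -/
/-- A set of edges is a matching if its edges are pairwise vertex-disjoint. -/
def IsMatching {V : Type*} (M : Finset (Sym2 V)) : Prop :=
  ∀ e ∈ M, ∀ f ∈ M, e ≠ f → ∀ v ∈ e, v ∉ f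

open Classical in
/-- `matchNum F` is the maximum size of a matching using only edges from `F`. -/
noncomputable def matchNum {V : Type*} (F : Finset (Sym2 V)) : ℕ :=
  (F.powerset.filter fun M => IsMatching M).sup Finset.card

/-- The first edges `{x_i, y_i}` of `n` disjoint paths `x_i - y_i - z_i - w_i`,
where vertex `(i, j)` is the `j`-th vertex of the `i`-th path. -/
def pathEdgesA (n : ℕ) : Finset (Sym2 (Fin n × Fin 4)) :=
  Finset.univ.image fun i : Fin n => s((i, (0 : Fin 4)), (i, (1 : Fin 4)))

/-- The middle edges `{y_i, z_i}` of the `n` disjoint paths. -/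
def pathEdgesB (n : ℕ) : Finset (Sym2 (Fin n × Fin 4)) :=
  Finset.univ.image fun i : Fin n => s((i, (1 : Fin 4)), (i, (2 : Fin 4)))

/-- The last edges `{z_i, w_i}` of the `n` disjoint paths. -/
def pathEdgesC (n : ℕ) : Finset (Sym2 (Fin n × Fin 4)) :=
  Finset.univ.image fun i : Fin n => s((i, (2 : Fin 4)), (i, (3 : Fin 4)))

/-!
A matching of `F` meets each vertex of a vertex cover of `F` at most once and every one of its
edges meets the cover, so it is no larger than the cover. The vertices `y_i` cover `A ∪ B` and `B`,
the vertices `z_i` cover `B ∪ C`, and together they cover `A ∪ B ∪ C`; the matchings `B` and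
`A ∪ C` have exactly the size of these covers.
-/

section Matching

variable {V : Type*}

theorem card_le_matchNum {F M : Finset (Sym2 V)} (hMF : M ⊆ F) (hM : IsMatching M) :
    M.card ≤ matchNum F := by
  classical
  exact Finset.le_sup (f := Finset.card) (Finset.mem_filter.2 ⟨Finset.mem_powerset.2 hMF, hM⟩)

theorem IsMatching.card_le_of_cover {M : Finset (Sym2 V)} (hM : IsMatching M) {S : Finset V}
    (hS : ∀ e ∈ M, ∃ v ∈ S, v ∈ e) : M.card ≤ S.card :=
  Finset.card_le_card_of_forall_subsingleton (fun e v => v ∈ e) hS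
    fun v _ _ ⟨he, hve⟩ _ ⟨hf, hvf⟩ => by_contra fun hne => hM _ he _ hf hne v hve hvf

theorem matchNum_le_card_of_cover {F : Finset (Sym2 V)} {S : Finset V}
    (hS : ∀ e ∈ F, ∃ v ∈ S, v ∈ e) : matchNum F ≤ S.card := by
  classical
  refine Finset.sup_le fun M hM => ?_
  obtain ⟨hMF, hM⟩ := Finset.mem_filter.1 hM
  exact hM.card_le_of_cover fun e he => hS e (Finset.mem_powerset.1 hMF he)

theorem matchNum_eq_of_cover {F M : Finset (Sym2 V)} (hMF : M ⊆ F) (hM : IsMatching M)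
    {S : Finset V} (hS : ∀ e ∈ F, ∃ v ∈ S, v ∈ e) (hcard : M.card = S.card) :
    matchNum F = M.card :=
  le_antisymm (hcard ▸ matchNum_le_card_of_cover hS) (card_le_matchNum hMF hM)

theorem isMatching_of_forall_mem_eq {M : Finset (Sym2 V)} (φ : V → Sym2 V)
    (h : ∀ e ∈ M, ∀ v ∈ e, φ v = e) : IsMatching M :=
  fun e he f hf hne v hve hvf => hne ((h e he v hve).symm.trans (h f hf v hvf))

end Matching

section Paths

variable {n : ℕ}

theorem mem_pathEdgesA {e : Sym2 (Fin n × Fin 4)} :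
    e ∈ pathEdgesA n ↔ ∃ i, e = s((i, 0), (i, 1)) := by
  simp [pathEdgesA, eq_comm]

theorem mem_pathEdgesB {e : Sym2 (Fin n × Fin 4)} :
    e ∈ pathEdgesB n ↔ ∃ i, e = s((i, 1), (i, 2)) := by
  simp [pathEdgesB, eq_comm]

theorem mem_pathEdgesC {e : Sym2 (Fin n × Fin 4)} :
    e ∈ pathEdgesC n ↔ ∃ i, e = s((i, 2), (i, 3)) := by
  simp [pathEdgesC, eq_comm]

theorem card_image_pathEdge (j k : Fin 4) (hjk : j ≠ k) :
    (Finset.univ.image fun i : Fin n => s((i, j), (i, k))).card = n := by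
  rw [Finset.card_image_of_injective _ fun i i' h => by simpa [hjk, Sym2.eq_iff] using h]
  simp

theorem card_pathEdgesA : (pathEdgesA n).card = n := card_image_pathEdge 0 1 (by decide)

theorem card_pathEdgesB : (pathEdgesB n).card = n := card_image_pathEdge 1 2 (by decide)

theorem card_pathEdgesC : (pathEdgesC n).card = n := card_image_pathEdge 2 3 (by decide)

theorem disjoint_pathEdgesA_B : Disjoint (pathEdgesA n) (pathEdgesB n) := by
  simp [Finset.disjoint_left, mem_pathEdgesA, mem_pathEdgesB]

theorem disjoint_pathEdgesB_C : Disjoint (pathEdgesB n) (pathEdgesC n) := by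
  simp [Finset.disjoint_left, mem_pathEdgesB, mem_pathEdgesC]

theorem disjoint_pathEdgesA_C : Disjoint (pathEdgesA n) (pathEdgesC n) := by
  simp [Finset.disjoint_left, mem_pathEdgesA, mem_pathEdgesC]

theorem card_pathEdgesA_union_C : (pathEdgesA n ∪ pathEdgesC n).card = 2 * n := by
  rw [Finset.card_union_of_disjoint disjoint_pathEdgesA_C, card_pathEdgesA, card_pathEdgesC,
    two_mul]

theorem isMatching_pathEdgesB : IsMatching (pathEdgesB n) :=
  isMatching_of_forall_mem_eq (fun v => s((v.1, 1), (v.1, 2))) <| by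
    simp only [mem_pathEdgesB]
    rintro _ ⟨i, rfl⟩ v hv
    rcases Sym2.mem_iff.1 hv with rfl | rfl <;> rfl

theorem isMatching_pathEdgesA_union_C : IsMatching (pathEdgesA n ∪ pathEdgesC n) :=
  isMatching_of_forall_mem_eq
    (fun v => if v.2 ≤ 1 then s((v.1, 0), (v.1, 1)) else s((v.1, 2), (v.1, 3))) <| by
    simp only [Finset.mem_union, mem_pathEdgesA, mem_pathEdgesC]
    rintro _ (⟨i, rfl⟩ | ⟨i, rfl⟩) v hv <;> rcases Sym2.mem_iff.1 hv with rfl | rfl <;> rfl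

theorem pathEdgesA_union_B_covered :
    ∀ e ∈ pathEdgesA n ∪ pathEdgesB n, ∃ v ∈ Finset.univ ×ˢ {(1 : Fin 4)}, v ∈ e := by
  simp only [Finset.mem_union, mem_pathEdgesA, mem_pathEdgesB]
  rintro _ (⟨i, rfl⟩ | ⟨i, rfl⟩) <;> simp

theorem pathEdgesB_union_C_covered :
    ∀ e ∈ pathEdgesB n ∪ pathEdgesC n, ∃ v ∈ Finset.univ ×ˢ {(2 : Fin 4)}, v ∈ e := by
  simp only [Finset.mem_union, mem_pathEdgesB, mem_pathEdgesC]
  rintro _ (⟨i, rfl⟩ | ⟨i, rfl⟩) <;> simp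

theorem pathEdgesA_union_B_union_C_covered :
    ∀ e ∈ pathEdgesA n ∪ pathEdgesB n ∪ pathEdgesC n,
      ∃ v ∈ Finset.univ ×ˢ {(1 : Fin 4), 2}, v ∈ e := by
  simp only [Finset.mem_union, mem_pathEdgesA, mem_pathEdgesB, mem_pathEdgesC]
  rintro _ ((⟨i, rfl⟩ | ⟨i, rfl⟩) | ⟨i, rfl⟩) <;> simp

end Paths

theorem almost_smoothness_factor_two_tight (n : ℕ) :
    Disjoint (pathEdgesA n) (pathEdgesB n) ∧
    Disjoint (pathEdgesB n) (pathEdgesC n) ∧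
    Disjoint (pathEdgesA n) (pathEdgesC n) ∧
    matchNum (pathEdgesA n ∪ pathEdgesB n) = n ∧
    matchNum (pathEdgesB n) = n ∧
    matchNum (pathEdgesB n ∪ pathEdgesC n) = n ∧
    matchNum (pathEdgesA n ∪ pathEdgesB n ∪ pathEdgesC n) = 2 * n := by
  refine ⟨disjoint_pathEdgesA_B, disjoint_pathEdgesB_C, disjoint_pathEdgesA_C, ?_, ?_, ?_, ?_⟩
  · rw [matchNum_eq_of_cover Finset.subset_union_right isMatching_pathEdgesB
      pathEdgesA_union_B_covered (by simp [card_pathEdgesB]), card_pathEdgesB]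
  · rw [matchNum_eq_of_cover subset_rfl isMatching_pathEdgesB
      (fun e he => pathEdgesA_union_B_covered e (Finset.mem_union_right _ he))
      (by simp [card_pathEdgesB]), card_pathEdgesB]
  · rw [matchNum_eq_of_cover Finset.subset_union_left isMatching_pathEdgesB
      pathEdgesB_union_C_covered (by simp [card_pathEdgesB]), card_pathEdgesB]
  · rw [matchNum_eq_of_cover (Finset.union_subset_union Finset.subset_union_left subset_rfl)
      isMatching_pathEdgesA_union_C pathEdgesA_union_B_union_C_covered
      (by simp [card_pathEdgesA_union_C, mul_comm]), card_pathEdgesA_union_C]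
end

section
/- Vertex-cover approximation guarantee from two nested greedy matchings: let B₂ ⊆ W ⊆ B₁ be edge sets, let M₁ be a maximal matching in B₁ and M₂ a maximal matching in B₂, and suppose 2|M₂| ≥ (1−ε)|M₁| for some ε ∈ (0, 1/2). Then V(M₁) is a vertex cover of W and |V(M₁)| ≤ 4(1+2ε)·VC(W), where VC(W) is the minimum vertex-cover size of the edge set W. -/
/-- `M` is a maximal matching in the edge set `F`. -/
def IsMaximalMatching {V : Type*} (M F : Finset (Sym2 V)) : Prop :=
  IsMatching M ∧ M ⊆ F ∧ ∀ e ∈ F, ∃ f ∈ M, ∃ v ∈ e, v ∈ f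

/-- `C` is a vertex cover of the edge set `F`. -/
def IsCover {V : Type*} (C : Finset V) (F : Finset (Sym2 V)) : Prop :=
  ∀ e ∈ F, ∃ v ∈ C, v ∈ e

/-- `vcNum F` is the minimum size of a vertex cover of the edge set `F`. -/
noncomputable def vcNum {V : Type*} (F : Finset (Sym2 V)) : ℕ :=
  sInf {n | ∃ C : Finset V, IsCover C F ∧ C.card = n}

open Classical in
/-- The set `V(M)` of endpoints of the edges of `M`. -/
noncomputable def endpoints {V : Type*} [Fintype V] (M : Finset (Sym2 V)) : Finset V :=
  Finset.univ.filter fun v => ∃ e ∈ M, v ∈ e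

/-
Every edge of `W ⊆ B₁` meets the maximal matching `M₁`, so `V(M₁)` covers `W`, and
`|V(M₁)| ≤ 2|M₁|`. The matching `M₂ ⊆ B₂ ⊆ W` needs one cover vertex per edge, so
`|M₂| ≤ VC(W)`. Finally `|M₁| ≤ 2|M₂| / (1 - ε) ≤ 2(1 + 2ε)|M₂|`, since
`(1 + 2ε)(1 - ε) = 1 + ε(1 - 2ε) ≥ 1` for `0 ≤ ε ≤ 1/2`.
-/

section

variable {V : Type*}

theorem IsCover.mono {C : Finset V} {F G : Finset (Sym2 V)} (hC : IsCover C F) (hGF : G ⊆ F) :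
    IsCover C G :=
  fun e he => hC e (hGF he)

theorem IsMatching.card_le_of_isCover {M F : Finset (Sym2 V)} {C : Finset V}
    (hM : IsMatching M) (hMF : M ⊆ F) (hC : IsCover C F) : M.card ≤ C.card := by
  rcases M.eq_empty_or_nonempty with rfl | ⟨e₀, -⟩
  · simp
  have : Nonempty V := ⟨e₀.out.1⟩
  choose! pick hpick_mem hpick_edge using fun e (he : e ∈ M) => hC e (hMF he)
  refine Finset.card_le_card_of_injOn pick hpick_mem fun e he f hf hef => ?_
  by_contra hne
  exact hM e he f hf hne (pick e) (hpick_edge e he) (hef ▸ hpick_edge f hf)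

theorem exists_isCover_card_eq_vcNum [Fintype V] (F : Finset (Sym2 V)) :
    ∃ C : Finset V, IsCover C F ∧ C.card = vcNum F := by
  have hcover_univ : IsCover (Finset.univ : Finset V) F :=
    fun e _ => ⟨e.out.1, Finset.mem_univ _, Sym2.out_fst_mem e⟩
  exact Nat.sInf_mem (s := {n | ∃ C : Finset V, IsCover C F ∧ C.card = n})
    ⟨_, Finset.univ, hcover_univ, rfl⟩

theorem IsMatching.card_le_vcNum [Fintype V] {M F : Finset (Sym2 V)}
    (hM : IsMatching M) (hMF : M ⊆ F) : M.card ≤ vcNum F := by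
  obtain ⟨C, hC, hCcard⟩ := exists_isCover_card_eq_vcNum F
  exact hCcard ▸ hM.card_le_of_isCover hMF hC

theorem IsMaximalMatching.isCover_endpoints [Fintype V] {M F : Finset (Sym2 V)}
    (hM : IsMaximalMatching M F) : IsCover (endpoints M) F := by
  intro e he
  obtain ⟨f, hf, v, hve, hvf⟩ := hM.2.2 e he
  exact ⟨v, by simpa [endpoints] using ⟨f, hf, hvf⟩, hve⟩

theorem card_endpoints_le [Fintype V] (M : Finset (Sym2 V)) :
    (endpoints M).card ≤ 2 * M.card := by
  classical
  have hsub : endpoints M ⊆ M.biUnion Sym2.toFinset := by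
    intro v hv
    simpa [endpoints] using hv
  calc (endpoints M).card ≤ (M.biUnion Sym2.toFinset).card := Finset.card_le_card hsub
    _ ≤ M.card * 2 := Finset.card_biUnion_le_card_mul _ _ _ fun e _ => by
        rw [Sym2.card_toFinset]; split_ifs <;> decide
    _ = 2 * M.card := mul_comm _ _

theorem le_two_mul_one_add_two_mul_of_one_sub_mul_le {ε a b : ℝ} (hε : 0 ≤ ε) (hε2 : ε ≤ 1 / 2)
    (ha : 0 ≤ a) (hab : (1 - ε) * a ≤ 2 * b) : a ≤ 2 * (1 + 2 * ε) * b := by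
  have hslack : 0 ≤ ε * (1 - 2 * ε) * a := mul_nonneg (mul_nonneg hε (by linarith)) ha
  nlinarith

end

theorem nested_greedy_matchings_vc_approx_general {V : Type*} [Fintype V]
    (B₂ W B₁ : Finset (Sym2 V)) (h₂ : B₂ ⊆ W) (h₁ : W ⊆ B₁)
    (M₁ M₂ : Finset (Sym2 V))
    (hM₁ : IsMaximalMatching M₁ B₁) (hM₂ : IsMaximalMatching M₂ B₂)
    (ε : ℝ) (hε : 0 < ε) (hε2 : ε < 1 / 2)
    (hclose : (1 - ε) * (M₁.card : ℝ) ≤ 2 * (M₂.card : ℝ)) :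
    IsCover (endpoints M₁) W ∧
    ((endpoints M₁).card : ℝ) ≤ 4 * (1 + 2 * ε) * (vcNum W : ℝ) := by
  refine ⟨hM₁.isCover_endpoints.mono h₁, ?_⟩
  have hM₂_le_vc : (M₂.card : ℝ) ≤ vcNum W := by
    exact_mod_cast hM₂.1.card_le_vcNum (hM₂.2.1.trans h₂)
  have hM₁_le : (M₁.card : ℝ) ≤ 2 * (1 + 2 * ε) * M₂.card :=
    le_two_mul_one_add_two_mul_of_one_sub_mul_le hε.le hε2.le (Nat.cast_nonneg _) hclose
  calc ((endpoints M₁).card : ℝ) ≤ 2 * M₁.card := by exact_mod_cast card_endpoints_le M₁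
    _ ≤ 2 * (2 * (1 + 2 * ε) * M₂.card) := by gcongr
    _ = 4 * (1 + 2 * ε) * M₂.card := by ring
    _ ≤ 4 * (1 + 2 * ε) * vcNum W := by gcongr

theorem nested_greedy_matchings_vc_approx {V : Type*} [Fintype V] [DecidableEq V]
    (B₂ W B₁ : Finset (Sym2 V)) (h₂ : B₂ ⊆ W) (h₁ : W ⊆ B₁)
    (M₁ M₂ : Finset (Sym2 V))
    (hM₁ : IsMaximalMatching M₁ B₁) (hM₂ : IsMaximalMatching M₂ B₂)
    (ε : ℝ) (hε : 0 < ε) (hε2 : ε < 1 / 2)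
    (hclose : (1 - ε) * (M₁.card : ℝ) ≤ 2 * (M₂.card : ℝ)) :
    IsCover (endpoints M₁) W ∧
    ((endpoints M₁).card : ℝ) ≤ 4 * (1 + 2 * ε) * (vcNum W : ℝ) :=
  nested_greedy_matchings_vc_approx_general B₂ W B₁ h₂ h₁ M₁ M₂ hM₁ hM₂ ε hε hε2 hclose
end
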